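/- For 1/2 ≤ η ≤ 1 and E > 0, the superposition-coding rate region boundary R_{B'}(R_{A'}) = g((1−η)E) − g(((1−η)/η)·g⁻¹(R_{A'})) is a decreasing, concave function of R_{A'} on [0, g(ηE)], with R_{B'}(0) = g((1−η)E) and R_{B'}(g(ηE)) = 0. -/

import Mathlib

open Real Set Filter

noncomputable def g (E : ℝ) : ℝ := (E + 1) * Real.log (E + 1) - E * Real.log E

noncomputable def ginv : ℝ → ℝ := Function.invFunOn g (Set.Ici 0)

/-!
Write `φ_l x = g (l * ginv x)`. At `x = g t` its derivative is `l * gDeriv (l t) / gDeriv t`.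
The derivative of this ratio in `t` has the sign of `F (l t) - F t` with
`F t = (t + 1) * gDeriv t`, and `F` is decreasing because `F' t = gDeriv t - 1 / t ≤ 0`
(this is `log y ≤ y - 1` at `y = (t + 1) / t`). So for `0 < l ≤ 1` the derivative of `φ_l` is
nondecreasing and `φ_l` is convex; the boundary curve is `g ((1 - η) E) - φ_l` with
`l = (1 - η) / η ∈ [0, 1]`.
-/

noncomputable def gDeriv (t : ℝ) : ℝ := log (t + 1) - log t

lemma g_zero : g 0 = 0 := by simp [g]

lemma continuous_g : Continuous g :=
  (continuous_mul_log.comp (continuous_add_const 1)).sub continuous_mul_log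

lemma hasDerivAt_g {t : ℝ} (ht : 0 < t) : HasDerivAt g (gDeriv t) t := by
  have h := ((hasDerivAt_mul_log (x := t + 1) (by positivity)).comp t
    ((hasDerivAt_id t).add_const 1)).sub (hasDerivAt_mul_log ht.ne')
  exact h.congr_deriv (by rw [gDeriv]; ring)

lemma gDeriv_pos {t : ℝ} (ht : 0 < t) : 0 < gDeriv t :=
  sub_pos.2 (log_lt_log ht (lt_add_one t))

lemma hasDerivAt_gDeriv {t : ℝ} (ht : 0 < t) :
    HasDerivAt gDeriv (-(t * (t + 1))⁻¹) t := by
  have h := ((hasDerivAt_log (x := t + 1) (by positivity)).comp t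
    ((hasDerivAt_id t).add_const 1)).sub (hasDerivAt_log ht.ne')
  refine h.congr_deriv ?_
  field_simp
  ring

lemma strictMonoOn_g : StrictMonoOn g (Ici 0) := by
  refine strictMonoOn_of_deriv_pos (convex_Ici 0) continuous_g.continuousOn fun t ht => ?_
  rw [interior_Ici] at ht
  rw [(hasDerivAt_g ht).deriv]
  exact gDeriv_pos ht

lemma g_nonneg {t : ℝ} (ht : 0 ≤ t) : 0 ≤ g t := by
  simpa [g_zero] using strictMonoOn_g.monotoneOn self_mem_Ici ht ht

lemma log_add_one_le_g {t : ℝ} (ht : 0 ≤ t) : log (t + 1) ≤ g t := by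
  have hg : g t = log (t + 1) + t * gDeriv t := by simp only [g, gDeriv]; ring
  rcases ht.eq_or_lt with rfl | ht
  · simp [g_zero]
  · rw [hg]
    exact le_add_of_nonneg_right (mul_pos ht (gDeriv_pos ht)).le

lemma surjOn_g : SurjOn g (Ici 0) (Ici 0) := by
  intro x (hx : 0 ≤ x)
  have hb : 0 ≤ exp x - 1 := by linarith [add_one_le_exp x]
  have hxb : x ≤ g (exp x - 1) := by
    simpa using log_add_one_le_g hb
  obtain ⟨t, ht, hgt⟩ := intermediate_value_Icc hb continuous_g.continuousOn
    ⟨by rwa [g_zero], hxb⟩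
  exact ⟨t, ht.1, hgt⟩

lemma ginv_g {t : ℝ} (ht : 0 ≤ t) : ginv (g t) = t :=
  strictMonoOn_g.injOn.leftInvOn_invFunOn ht

lemma ginv_zero : ginv 0 = 0 := by
  simpa [g_zero] using ginv_g le_rfl

lemma ginv_nonneg {x : ℝ} (hx : 0 ≤ x) : 0 ≤ ginv x :=
  surjOn_g.mapsTo_invFunOn hx

lemma g_ginv {x : ℝ} (hx : 0 ≤ x) : g (ginv x) = x :=
  surjOn_g.rightInvOn_invFunOn hx

lemma ginv_pos {x : ℝ} (hx : 0 < x) : 0 < ginv x := by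
  refine (ginv_nonneg hx.le).lt_of_ne fun h => hx.ne ?_
  rw [← g_ginv hx.le, ← h, g_zero]

lemma strictMonoOn_ginv : StrictMonoOn ginv (Ici 0) := by
  intro x hx y hy hxy
  rw [← strictMonoOn_g.lt_iff_lt (ginv_nonneg hx) (ginv_nonneg hy), g_ginv hx, g_ginv hy]
  exact hxy

lemma image_ginv_Ici : ginv '' Ici 0 = Ici 0 :=
  surjOn_g.mapsTo_invFunOn.image_subset.antisymm fun t ht => ⟨g t, g_nonneg ht, ginv_g ht⟩

lemma continuousAt_ginv {x : ℝ} (hx : 0 < x) : ContinuousAt ginv x := by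
  refine strictMonoOn_ginv.continuousAt_of_image_mem_nhds (Ici_mem_nhds hx) ?_
  rw [image_ginv_Ici]
  exact Ici_mem_nhds (ginv_pos hx)

lemma continuousOn_ginv : ContinuousOn ginv (Ici 0) := by
  intro x (hx : 0 ≤ x)
  rcases hx.eq_or_lt with rfl | hx
  · refine strictMonoOn_ginv.continuousWithinAt_right_of_surjOn self_mem_nhdsWithin ?_
    intro t (ht : ginv 0 < t)
    rw [ginv_zero] at ht
    exact ⟨g t, g_nonneg ht.le, ginv_g ht.le⟩
  · exact (continuousAt_ginv hx).continuousWithinAt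

lemma hasDerivAt_ginv {x : ℝ} (hx : 0 < x) : HasDerivAt ginv (gDeriv (ginv x))⁻¹ x :=
  HasDerivAt.of_local_left_inverse (continuousAt_ginv hx) (hasDerivAt_g (ginv_pos hx))
    (gDeriv_pos (ginv_pos hx)).ne' (eventually_ge_nhds hx |>.mono fun _ hy => g_ginv hy)

lemma gDeriv_le_inv {t : ℝ} (ht : 0 < t) : gDeriv t ≤ t⁻¹ := by
  have h := log_le_sub_one_of_pos (x := (t + 1) / t) (by positivity)
  rwa [log_div (by positivity) ht.ne', add_div, div_self ht.ne', add_sub_cancel_left,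
    one_div] at h

lemma antitoneOn_add_one_mul_gDeriv : AntitoneOn (fun t => (t + 1) * gDeriv t) (Ioi 0) := by
  have hderiv : ∀ t ∈ Ioi (0 : ℝ),
      HasDerivAt (fun t => (t + 1) * gDeriv t) (gDeriv t - t⁻¹) t := by
    intro t (ht : 0 < t)
    refine (((hasDerivAt_id' t).add_const 1).mul (hasDerivAt_gDeriv ht)).congr_deriv ?_
    field_simp
    ring
  refine antitoneOn_of_deriv_nonpos (convex_Ioi 0)
    (fun t ht => (hderiv t ht).continuousAt.continuousWithinAt) ?_ ?_ <;>
  rw [interior_Ioi]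
  · exact fun t ht => (hderiv t ht).differentiableAt.differentiableWithinAt
  · intro t ht
    rw [(hderiv t ht).deriv]
    exact sub_nonpos.2 (gDeriv_le_inv ht)

lemma monotoneOn_gDeriv_ratio {l : ℝ} (hl0 : 0 < l) (hl1 : l ≤ 1) :
    MonotoneOn (fun t => l * gDeriv (l * t) / gDeriv t) (Ioi 0) := by
  have hderiv : ∀ t ∈ Ioi (0 : ℝ), HasDerivAt (fun t => l * gDeriv (l * t) / gDeriv t)
      (l * ((l * t + 1) * gDeriv (l * t) - (t + 1) * gDeriv t) /
        (t * (t + 1) * (l * t + 1) * gDeriv t ^ 2)) t := by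
    intro t (ht : 0 < t)
    have hlt : 0 < l * t := mul_pos hl0 ht
    have hv := (gDeriv_pos ht).ne'
    refine ((((hasDerivAt_gDeriv hlt).comp t ((hasDerivAt_id' t).const_mul l)).const_mul l).div
      (hasDerivAt_gDeriv ht) hv).congr_deriv ?_
    simp only [Function.comp_def]
    field_simp
    ring
  refine monotoneOn_of_deriv_nonneg (convex_Ioi 0)
    (fun t ht => (hderiv t ht).continuousAt.continuousWithinAt) ?_ ?_ <;>
  rw [interior_Ioi]
  · exact fun t ht => (hderiv t ht).differentiableAt.differentiableWithinAt
  · intro t (ht : 0 < t)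
    rw [(hderiv t ht).deriv]
    have hF := antitoneOn_add_one_mul_gDeriv (mem_Ioi.2 (mul_pos hl0 ht)) (mem_Ioi.2 ht)
      (mul_le_of_le_one_left ht.le hl1)
    exact div_nonneg (mul_nonneg hl0.le (sub_nonneg.2 hF)) (by positivity)

lemma hasDerivAt_g_mul_ginv {l x : ℝ} (hl : 0 < l) (hx : 0 < x) :
    HasDerivAt (fun x => g (l * ginv x)) (l * gDeriv (l * ginv x) / gDeriv (ginv x)) x := by
  have h := (hasDerivAt_g (mul_pos hl (ginv_pos hx))).comp x ((hasDerivAt_ginv hx).const_mul l)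
  exact h.congr_deriv (by ring)

lemma monotoneOn_g_mul_ginv {l : ℝ} (hl : 0 ≤ l) :
    MonotoneOn (fun x => g (l * ginv x)) (Ici 0) := fun _ hx _ hy hxy =>
  strictMonoOn_g.monotoneOn (mul_nonneg hl (ginv_nonneg hx)) (mul_nonneg hl (ginv_nonneg hy))
    (mul_le_mul_of_nonneg_left (strictMonoOn_ginv.monotoneOn hx hy hxy) hl)

lemma convexOn_g_mul_ginv {l : ℝ} (hl0 : 0 ≤ l) (hl1 : l ≤ 1) :
    ConvexOn ℝ (Ici 0) (fun x => g (l * ginv x)) := by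
  rcases hl0.eq_or_lt with rfl | hl0
  · simpa [g_zero] using convexOn_const 0 (convex_Ici 0)
  have hcont : ContinuousOn (fun x => g (l * ginv x)) (Ici 0) :=
    continuous_g.comp_continuousOn (continuousOn_ginv.const_smul l)
  refine MonotoneOn.convexOn_of_deriv (convex_Ici 0) hcont ?_ ?_ <;>
  rw [interior_Ici]
  · exact fun x hx => (hasDerivAt_g_mul_ginv hl0 hx).differentiableAt.differentiableWithinAt
  · intro x (hx : 0 < x) y (hy : 0 < y) hxy
    rw [(hasDerivAt_g_mul_ginv hl0 hx).deriv, (hasDerivAt_g_mul_ginv hl0 hy).deriv]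
    exact monotoneOn_gDeriv_ratio hl0 hl1 (ginv_pos hx) (ginv_pos hy)
      (strictMonoOn_ginv.monotoneOn hx.le hy.le hxy)

theorem broadcast_boundary_properties (η E : ℝ) (hη0 : 1 / 2 ≤ η) (hη1 : η ≤ 1)
    (hE : 0 < E) :
    AntitoneOn (fun R => g ((1 - η) * E) - g ((1 - η) / η * ginv R))
      (Set.Icc 0 (g (η * E))) ∧
    ConcaveOn ℝ (Set.Icc 0 (g (η * E)))
      (fun R => g ((1 - η) * E) - g ((1 - η) / η * ginv R)) ∧
    g ((1 - η) * E) - g ((1 - η) / η * ginv 0) = g ((1 - η) * E) ∧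
    g ((1 - η) * E) - g ((1 - η) / η * ginv (g (η * E))) = 0 := by
  have hη : 0 < η := by linarith
  have hl0 : 0 ≤ (1 - η) / η := div_nonneg (by linarith) hη.le
  have hl1 : (1 - η) / η ≤ 1 := (div_le_one hη).2 (by linarith)
  have hIcc : Icc 0 (g (η * E)) ⊆ Ici 0 := Icc_subset_Ici_self
  refine ⟨?_, ?_, ?_, ?_⟩
  · exact fun x hx y hy hxy =>
      sub_le_sub_left (monotoneOn_g_mul_ginv hl0 (hIcc hx) (hIcc hy) hxy) _
  · exact (concaveOn_const _ (convex_Icc _ _)).sub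
      ((convexOn_g_mul_ginv hl0 hl1).subset hIcc (convex_Icc _ _))
  · simp [ginv_zero, g_zero]
  · have hcancel : (1 - η) / η * (η * E) = (1 - η) * E := by field_simp
    rw [ginv_g (by positivity), hcancel, sub_self]
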